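/- arXiv:1606.08262 — 8 statements merged into one kernel-verified Lean document; each statement's English description precedes it below -/
import Mathlib

section
/- If the action of G on X is not locally finite (i.e., there is a finitely generated subgroup H of G and a point x ∈ X whose H-orbit is infinite), then some subset of X is equidecomposable with a proper subset of itself. -/
open Pointwise

/-- Two subsets `A`, `B` of a `G`-set `X` are equidecomposable if there are finite
partitions `{A_i}` of `A` and `{B_i}` of `B` and elements `s_i ∈ G` with `B_i = s_i • A_i`. -/
def SetEquidecomp (G : Type*) {X : Type*} [Group G] [MulAction G X] (A B : Set X) : Prop :=
  ∃ (n : ℕ) (As Bs : Fin n → Set X) (s : Fin n → G),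
    (⋃ i, As i) = A ∧ (⋃ i, Bs i) = B ∧
    Pairwise (Function.onFun Disjoint As) ∧ Pairwise (Function.onFun Disjoint Bs) ∧
    ∀ i, Bs i = (s i) • As i

/-- An action is locally finite if every orbit of every finitely generated subgroup
is finite. -/
def LocFinAction (G X : Type*) [Group G] [MulAction G X] : Prop :=
  ∀ H : Subgroup G, H.FG → ∀ x : X, (MulAction.orbit H x).Finite

/-!
If `x` has an infinite orbit under the subgroup generated by a finite set `S`, the Schreier graph
of `T = S ∪ S⁻¹` on that orbit is infinite, connected and locally finite, so by Kőnig's lemma it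
contains a geodesic ray `y₀ = x, y₁, y₂, …` with `y (k + 1) ∈ T • y k`. The shift `y k ↦ y (k + 1)`
is injective and moves every point by an element of the finite set `T`; sorting the points of the
ray by the element used cuts the ray into finitely many pieces that are translated onto the ray
minus its first point.
-/

open Set Function

open CategoryTheory Opposite in
theorem exists_seq_forall_proj_succ_of_finite {α : ℕ → Type*} [∀ n, Finite (α n)]
    [∀ n, Nonempty (α n)] (p : ∀ n, α (n + 1) → α n) :
    ∃ f : ∀ n, α n, ∀ n, p n (f (n + 1)) = f n := by
  let F := Functor.ofOpSequence (X := α) (fun n => TypeCat.ofHom (p n))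
  have (j : ℕᵒᵖ) : Finite (F.obj j) := inferInstanceAs (Finite (α j.unop))
  have (j : ℕᵒᵖ) : Nonempty (F.obj j) := inferInstanceAs (Nonempty (α j.unop))
  obtain ⟨s, hs⟩ := nonempty_sections_of_finite_inverse_system F
  refine ⟨fun n => s (op n), fun n => ?_⟩
  have := hs (homOfLE n.le_succ).op
  simp only [F, Functor.ofOpSequence_map_homOfLE_succ] at this
  exact this

section

variable {G X : Type*} [Group G] [MulAction G X]

theorem SetEquidecomp.image_of_injOn {T : Set G} (hT : T.Finite) {A : Set X} {f : X → X}
    (hf : InjOn f A) (hmove : ∀ a ∈ A, ∃ t ∈ T, f a = t • a) : SetEquidecomp G A (f '' A) := by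
  rcases A.eq_empty_or_nonempty with rfl | ⟨a₀, ha₀⟩
  · exact ⟨0, Fin.elim0, Fin.elim0, Fin.elim0, by simp, by simp, fun i => i.elim0,
      fun i => i.elim0, fun i => i.elim0⟩
  obtain ⟨n, t, rfl⟩ := hT.fin_embedding
  -- `choose!` needs a default index, which the point `a₀` provides.
  have : Nonempty (Fin n) := (hmove a₀ ha₀).elim fun _ ⟨⟨i, _⟩, _⟩ => ⟨i⟩
  choose! c hc using fun a ha => exists_range_iff.mp (hmove a ha)
  set As : Fin n → Set X := fun i => {a ∈ A | c a = i}
  have hAs : Pairwise (Disjoint on As) := fun i j hij =>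
    disjoint_left.mpr fun a ha ha' => hij (ha.2.symm.trans ha'.2)
  have hAs_union : ⋃ i, As i = A := by ext a; simp [As]
  have hBs : ∀ i, t i • As i = f '' As i := fun i =>
    (image_congr fun a ha => by rw [hc a ha.1, ha.2]).symm
  refine ⟨n, As, fun i => t i • As i, t, hAs_union, ?_, hAs, ?_, fun i => rfl⟩
  · simp only [hBs, ← image_iUnion, hAs_union]
  · intro i j hij
    simp only [onFun, hBs]
    exact (hAs hij).image hf (fun a ha => ha.1) (fun a ha => ha.1)


theorem SetEquidecomp.range_comp_succ {T : Set G} (hT : T.Finite) {y : ℕ → X} (hy : Injective y)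
    (hstep : ∀ k, ∃ t ∈ T, y (k + 1) = t • y k) :
    SetEquidecomp G (range y) (range (y ∘ Nat.succ)) := by
  have hshift : extend y (y ∘ Nat.succ) id ∘ y = y ∘ Nat.succ := funext (hy.extend_apply _ _)
  rw [← hshift, range_comp]
  refine .image_of_injOn hT ?_ ?_
  · rintro _ ⟨k, rfl⟩ _ ⟨l, rfl⟩ h
    simp only [hy.extend_apply] at h
    exact congrArg y (Nat.succ_injective (hy h))
  · rintro _ ⟨k, rfl⟩
    simpa only [hy.extend_apply, comp_apply] using hstep k

theorem range_comp_succ_ssubset {y : ℕ → X} (hy : Injective y) : range (y ∘ Nat.succ) ⊂ range y :=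
  (range_comp_subset_range _ _).ssubset_of_mem_notMem (mem_range_self 0)
    (by rintro ⟨k, hk⟩; exact Nat.succ_ne_zero k (hy hk))

def wordBall (T : Set G) (x : X) : ℕ → Set X
  | 0 => {x}
  | n + 1 => wordBall T x n ∪ T • wordBall T x n

def wordSphere (T : Set G) (x : X) : ℕ → Set X
  | 0 => {x}
  | n + 1 => wordBall T x (n + 1) \ wordBall T x n

variable {T : Set G} {x : X}

theorem wordBall_finite (hT : T.Finite) (n : ℕ) : (wordBall T x n).Finite := by
  induction n with
  | zero => exact finite_singleton x
  | succ n ih => exact ih.union (hT.smul ih)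

theorem wordBall_mono : Monotone (wordBall T x) :=
  monotone_nat_of_le_succ fun _ => subset_union_left

theorem smul_mem_wordBall_succ {t : G} (ht : t ∈ T) {n : ℕ} {z : X} (hz : z ∈ wordBall T x n) :
    t • z ∈ wordBall T x (n + 1) :=
  Or.inr (smul_mem_smul ht hz)

theorem orbit_closure_subset_iUnion_wordBall (S : Set G) (x : X) :
    MulAction.orbit (Subgroup.closure S) x ⊆ ⋃ n, wordBall (S ∪ S⁻¹) x n := by
  suffices ∀ g ∈ Subgroup.closure S, ∃ n, g • x ∈ wordBall (S ∪ S⁻¹) x n by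
    rintro _ ⟨⟨g, hg⟩, rfl⟩
    exact mem_iUnion.mpr (this g hg)
  intro g hg
  induction hg using Subgroup.closure_induction_left with
  | one => exact ⟨0, by simp [wordBall]⟩
  | mul_left t ht g _ ih =>
    obtain ⟨n, hn⟩ := ih
    exact ⟨n + 1, mul_smul t g x ▸ smul_mem_wordBall_succ (mem_union_left _ ht) hn⟩
  | inv_mul_cancel t ht g _ ih =>
    obtain ⟨n, hn⟩ := ih
    have ht' : t⁻¹ ∈ S ∪ S⁻¹ := mem_union_right _ (inv_mem_inv.mpr ht)
    exact ⟨n + 1, mul_smul t⁻¹ g x ▸ smul_mem_wordBall_succ ht' hn⟩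

theorem iUnion_wordBall_subset_of_wordBall_succ_subset {n : ℕ}
    (h : wordBall T x (n + 1) ⊆ wordBall T x n) : ⋃ m, wordBall T x m ⊆ wordBall T x n := by
  have hstable : ∀ k, wordBall T x (n + k) ⊆ wordBall T x n := by
    intro k
    induction k with
    | zero => rfl
    | succ k ih => exact (union_subset_union ih (smul_subset_smul_left ih)).trans h
  exact iUnion_subset fun m => (wordBall_mono (Nat.le_add_left m n)).trans (hstable m)

theorem wordSphere_subset_wordBall (n : ℕ) : wordSphere T x n ⊆ wordBall T x n := by
  cases n with
  | zero => rfl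
  | succ n => exact sdiff_subset

theorem wordSphere_nonempty (hT : T.Finite) (h : (⋃ n, wordBall T x n).Infinite) (n : ℕ) :
    (wordSphere T x n).Nonempty := by
  cases n with
  | zero => exact singleton_nonempty x
  | succ n =>
    by_contra hempty
    rw [not_nonempty_iff_eq_empty, wordSphere, sdiff_eq_empty] at hempty
    exact h ((wordBall_finite hT n).subset (iUnion_wordBall_subset_of_wordBall_succ_subset hempty))

theorem exists_smul_eq_of_mem_wordSphere_succ {n : ℕ} {z : X} (hz : z ∈ wordSphere T x (n + 1)) :
    ∃ w ∈ wordSphere T x n, ∃ t ∈ T, z = t • w := by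
  obtain ⟨hz_ball | hz_smul, hz_new⟩ := hz
  · exact absurd hz_ball hz_new
  obtain ⟨t, ht, w, hw, rfl⟩ := hz_smul
  refine ⟨w, ?_, t, ht, rfl⟩
  cases n with
  | zero => exact hw
  | succ m => exact ⟨hw, fun hw' => hz_new (smul_mem_wordBall_succ ht hw')⟩

theorem pairwise_disjoint_wordSphere : Pairwise (Disjoint on wordSphere T x) := by
  refine (pairwise_disjoint_on _).mpr fun a b hab => ?_
  obtain ⟨c, rfl⟩ := Nat.exists_eq_add_of_lt hab
  exact disjoint_left.mpr fun z hza hzb =>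
    hzb.2 (wordBall_mono (Nat.le_add_right a c) (wordSphere_subset_wordBall a hza))

theorem exists_injective_seq_smul_of_iUnion_wordBall_infinite (hT : T.Finite)
    (h : (⋃ n, wordBall T x n).Infinite) :
    ∃ y : ℕ → X, Injective y ∧ ∀ k, ∃ t ∈ T, y (k + 1) = t • y k := by
  have (n : ℕ) : Finite (wordSphere T x n) :=
    ((wordBall_finite hT n).subset (wordSphere_subset_wordBall n)).to_subtype
  have (n : ℕ) : Nonempty (wordSphere T x n) := (wordSphere_nonempty hT h n).to_subtype
  choose pred hpred using fun n (z : wordSphere T x (n + 1)) =>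
    exists_smul_eq_of_mem_wordSphere_succ z.2
  obtain ⟨f, hf⟩ := exists_seq_forall_proj_succ_of_finite (α := fun n => wordSphere T x n)
    fun n z => ⟨pred n z, (hpred n z).1⟩
  refine ⟨fun n => f n, fun a b hab => ?_, fun k => ?_⟩
  · by_contra hne
    exact (pairwise_disjoint_wordSphere hne).ne_of_mem (f a).2 (f b).2 hab
  · simpa only [← hf k] using (hpred k (f (k + 1))).2

end

theorem exists_equidecomp_proper_of_not_locFin {G X : Type*} [Group G] [MulAction G X]
    (h : ¬ LocFinAction G X) :
    ∃ A B : Set X, B ⊂ A ∧ SetEquidecomp G A B := by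
  simp only [LocFinAction, not_forall] at h
  obtain ⟨_, ⟨S, rfl⟩, x, hx⟩ := h
  have hT : (S ∪ S⁻¹ : Set G).Finite := S.finite_toSet.union S.finite_toSet.inv
  obtain ⟨y, hy, hstep⟩ := exists_injective_seq_smul_of_iUnion_wordBall_infinite hT
    (.mono (orbit_closure_subset_iUnion_wordBall _ x) hx)
  exact ⟨_, _, range_comp_succ_ssubset hy, .range_comp_succ hT hy hstep⟩
end

section
/- Let G act on X, let S ⊆ G be finite, and suppose (s_n)_{n≥1} is a sequence in S such that the points x_n := s_n ⋯ s_1 • x (for n ≥ 1) are pairwise distinct. Then the set γ := {x_n : n ≥ 1} is equidecomposable with its proper subset γ \ {x_1}. -/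
open Pointwise

/-!
The shift `y n ↦ y (n + 1)` maps `γ = range y` bijectively onto `γ \ {y 0}`, and on the piece
`{y n | f (n + 1) = s}` it is the translation by `s ∈ S`. Since `S` is finite, these are finitely
many pieces, disjoint because `y` is injective, and so are their translates.
-/

open Function Set

lemma range_succ_eq_range_sdiff_zero {X : Type*} {y : ℕ → X} (hy : Injective y) :
    range (fun n => y (n + 1)) = range y \ {y 0} := by
  ext z
  constructor
  · rintro ⟨n, rfl⟩
    exact ⟨mem_range_self _, fun h => n.succ_ne_zero (hy h)⟩
  · rintro ⟨⟨_ | n, rfl⟩, h⟩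
    exacts [absurd rfl h, mem_range_self n]

section
variable {G X : Type*} [Group G] [MulAction G X]

theorem SetEquidecomp.of_finite_index {ι : Type*} [Finite ι] {A B : Set X}
    (As Bs : ι → Set X) (s : ι → G) (hA : ⋃ i, As i = A) (hB : ⋃ i, Bs i = B)
    (hAd : Pairwise (Disjoint on As)) (hBd : Pairwise (Disjoint on Bs))
    (hs : ∀ i, Bs i = s i • As i) : SetEquidecomp G A B := by
  obtain ⟨n, ⟨e⟩⟩ := Finite.exists_equiv_fin ι
  exact ⟨n, As ∘ e.symm, Bs ∘ e.symm, s ∘ e.symm, e.symm.surjective.iUnion_comp As ▸ hA,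
    e.symm.surjective.iUnion_comp Bs ▸ hB, hAd.comp_of_injective e.symm.injective,
    hBd.comp_of_injective e.symm.injective, fun i => hs _⟩

theorem SetEquidecomp.range_smul_range {ι α : Type*} [Finite ι] (g : ι → G) (c : α → ι)
    {p : α → X} (hp : Injective p) (hq : Injective fun a => g (c a) • p a) :
    SetEquidecomp G (range p) (range fun a => g (c a) • p a) := by
  refine .of_finite_index (fun i => p '' (c ⁻¹' {i}))
    (fun i => (fun a => g (c a) • p a) '' (c ⁻¹' {i})) g ?_ ?_ ?_ ?_ fun i => ?_
  · rw [← image_iUnion, ← preimage_iUnion, iUnion_of_singleton, preimage_univ, image_univ]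
  · rw [← image_iUnion, ← preimage_iUnion, iUnion_of_singleton, preimage_univ, image_univ]
  · exact fun i j hij => (disjoint_image_iff hp).2 ((disjoint_singleton.2 hij).preimage c)
  · exact fun i j hij => (disjoint_image_iff hq).2 ((disjoint_singleton.2 hij).preimage c)
  · rw [← image_smul, image_image]
    exact image_congr fun a (ha : c a = i) => by rw [ha]

end

/-- If  (with ,  finite) are pairwise
distinct points, then  is equidecomposable with its proper subset
. -/
theorem path_equidecomp_with_proper_subset {G X : Type*} [Group G] [MulAction G X]
    (S : Set G) (hS : S.Finite) (f : ℕ → G) (hf : ∀ n, f n ∈ S) (x : X)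
    (y : ℕ → X) (hy : ∀ n, y n = (((List.range (n + 1)).reverse.map f).prod) • x)
    (hinj : Function.Injective y) :
    Set.range y \ {y 0} ⊂ Set.range y ∧
      SetEquidecomp G (Set.range y) (Set.range y \ {y 0}) := by
  have hstep (n : ℕ) : y (n + 1) = f (n + 1) • y n := by
    rw [hy, hy, List.range_succ (n := n + 1)]
    simp [mul_smul]
  have : Finite S := hS.to_subtype
  refine ⟨sdiff_singleton_ssubset.2 (mem_range_self 0), ?_⟩
  have key := SetEquidecomp.range_smul_range (p := y) (Subtype.val : S → G)
    (fun n => ⟨f (n + 1), hf (n + 1)⟩) hinj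
  simp only [← hstep] at key
  rw [← range_succ_eq_range_sdiff_zero hinj]
  exact key (hinj.comp Nat.succ_injective)
end

section
/- If the action of G on X is locally finite, then no subset of X is equidecomposable with a proper subset of itself. -/
open Pointwise

/-- Two subsets `A`, `B` of a `G`-set `X` are equidecomposable if there are finite
partitions `{A_i}` of `A` and `{B_i}` of `B` and elements `s_i ∈ G` with `B_i = s_i • A_i`. -/
def Equidecomp' (G : Type*) {X : Type*} [Group G] [MulAction G X] (A B : Set X) : Prop :=
  ∃ (n : ℕ) (As Bs : Fin n → Set X) (s : Fin n → G),
    (⋃ i, As i) = A ∧ (⋃ i, Bs i) = B ∧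
    Pairwise (Function.onFun Disjoint As) ∧ Pairwise (Function.onFun Disjoint Bs) ∧
    ∀ i, Bs i = (s i) • As i

/-!
An equidecomposition of `A` with `B` gives an injection `f : A → B` moving each point by one of
finitely many group elements, hence inside the orbit of the finitely generated subgroup `H` they
generate. By local finiteness, `f` maps each finite set `orbit H a ∩ A` injectively into itself,
so it is onto it; thus every `a ∈ A` lies in the image of `f`, which is contained in `B`.
-/

open MulAction Set

section

variable {G X : Type*} [Group G] [MulAction G X]

theorem MulAction.surjOn_of_injOn_of_mapsTo_of_finite_orbit {A : Set X} {f : X → X}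
    (hfin : ∀ x : X, (orbit G x).Finite) (hmaps : MapsTo f A A) (hinj : InjOn f A)
    (horb : ∀ x ∈ A, f x ∈ orbit G x) : SurjOn f A A := by
  intro a ha
  have hmapsY : MapsTo f (orbit G a ∩ A) (orbit G a ∩ A) := fun x ⟨hxa, hxA⟩ =>
    ⟨orbit_eq_iff.mpr hxa ▸ horb x hxA, hmaps hxA⟩
  have hbij : BijOn f (orbit G a ∩ A) (orbit G a ∩ A) :=
    ((hfin a).inter_of_left A).injOn_iff_bijOn_of_mapsTo hmapsY |>.mp (hinj.mono inter_subset_right)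
  obtain ⟨x, ⟨-, hxA⟩, rfl⟩ := hbij.surjOn ⟨mem_orbit_self a, ha⟩
  exact mem_image_of_mem f hxA

theorem Equidecomp'.exists_injOn_mapsTo {A B : Set X} (h : Equidecomp' G A B) :
    ∃ S : Set G, S.Finite ∧ ∃ f : X → X,
      MapsTo f A B ∧ InjOn f A ∧ ∀ x ∈ A, ∃ g ∈ S, f x = g • x := by
  classical
  obtain ⟨n, As, Bs, s, rfl, rfl, -, hdisjB, hs⟩ := h
  let f : X → X := fun x => if hx : ∃ i, x ∈ As i then s hx.choose • x else x
  have hpiece : ∀ x ∈ ⋃ i, As i, ∃ i, f x = s i • x ∧ f x ∈ Bs i := by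
    intro x hx
    have hex : ∃ i, x ∈ As i := mem_iUnion.mp hx
    have hfx : f x = s hex.choose • x := dif_pos hex
    exact ⟨hex.choose, hfx, hfx ▸ hs _ ▸ smul_mem_smul_set hex.choose_spec⟩
  refine ⟨range s, finite_range s, f, fun x hx => ?_, fun x hx y hy hxy => ?_, fun x hx => ?_⟩
  · obtain ⟨i, -, hfx⟩ := hpiece x hx
    exact mem_iUnion_of_mem i hfx
  · obtain ⟨i, hfx, hfxB⟩ := hpiece x hx
    obtain ⟨j, hfy, hfyB⟩ := hpiece y hy
    obtain rfl : i = j := by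
      by_contra hij
      exact (hdisjB hij).le_bot ⟨hfxB, hxy ▸ hfyB⟩
    exact smul_left_cancel (s i) (hfx.symm.trans (hxy.trans hfy))
  · obtain ⟨i, hfx, -⟩ := hpiece x hx
    exact ⟨s i, mem_range_self i, hfx⟩

end

theorem not_equidecomp_proper_of_locFin {G X : Type*} [Group G] [MulAction G X]
    (h : LocFinAction G X) :
    ∀ A B : Set X, B ⊂ A → ¬ Equidecomp' G A B := by
  rintro A B ⟨hBA, hAB⟩ hequi
  obtain ⟨S, hS, f, hmaps, hinj, hmove⟩ := hequi.exists_injOn_mapsTo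
  let H := Subgroup.closure S
  have hfin : ∀ x : X, (orbit H x).Finite := h H ((Subgroup.fg_iff H).mpr ⟨S, rfl, hS⟩)
  have horb : ∀ x ∈ A, f x ∈ orbit H x := fun x hx => by
    obtain ⟨g, hg, hfx⟩ := hmove x hx
    exact ⟨⟨g, Subgroup.subset_closure hg⟩, hfx.symm⟩
  have hsurj : SurjOn f A A :=
    surjOn_of_injOn_of_mapsTo_of_finite_orbit hfin (hmaps.mono_right hBA) hinj horb
  exact hAB fun a ha => by
    obtain ⟨x, hx, rfl⟩ := hsurj ha
    exact hmaps hx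
end

section
/- An action of a group G on a set X is locally finite if and only if X is not equidecomposable with a proper subset of itself. -/
open Pointwise

/-!
Equidecomposing `X` with `B` amounts to giving an injective map `y ↦ σ y • y` with range `B`,
where `σ : X → G` takes finitely many values. If the action is locally finite, such a map sends
every orbit of the finitely generated subgroup generated by the values of `σ` injectively into
itself; these orbits are finite, so the map is surjective. Conversely, an infinite orbit of the
subgroup generated by a finite set `S` is an infinite connected component of the Schreier graph,
which is locally finite, so by Kőnig's lemma it contains a geodesic ray `v 0, v 1, …`. Shifting
along the ray and fixing every other point is a map of the above form whose range misses `v 0`.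
-/

open Set Function

theorem Relation.exists_seq_of_infinite_reflTransGen {α : Type*} {r : α → α → Prop}
    (hr : ∀ a, {b | r a b}.Finite) {a : α} (ha : {b | ReflTransGen r a b}.Infinite) :
    ∃ f : ℕ → α, f 0 = a ∧ ∀ n, r (f n) (f (n + 1)) := by
  -- finitely many successors cannot all reach only finitely many points
  have step : ∀ a : {a // {b | ReflTransGen r a b}.Infinite},
      ∃ b : {a // {b | ReflTransGen r a b}.Infinite}, r a b := by
    rintro ⟨a, ha⟩
    by_contra! hfin
    have hsucc : ∀ b ∈ {b | r a b}, {c | ReflTransGen r b c}.Finite :=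
      fun b hab ↦ Set.not_infinite.1 fun hb ↦ hfin ⟨b, hb⟩ hab
    refine ha ((((hr a).biUnion hsucc).insert a).subset fun c hc ↦ ?_)
    rcases hc.cases_head with rfl | ⟨b, hab, hbc⟩
    · exact mem_insert _ _
    · exact mem_insert_of_mem _ (mem_biUnion hab hbc)
  choose next hnext using step
  exact ⟨fun n ↦ (next^[n] ⟨a, ha⟩).1, rfl, fun n ↦ by
    simpa only [iterate_succ_apply'] using hnext _⟩

namespace SimpleGraph

variable {V : Type*} {Γ : SimpleGraph V}

theorem Reachable.reflTransGen_dist_succ {x y : V} (h : Γ.Reachable x y) :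
    Relation.ReflTransGen (fun v w ↦ Γ.Adj v w ∧ Γ.dist x w = Γ.dist x v + 1) x y := by
  obtain ⟨n, hn⟩ : ∃ n, Γ.dist x y = n := ⟨_, rfl⟩
  induction n generalizing y with
  | zero => rw [h.dist_eq_zero_iff.1 hn]
  | succ n ih =>
    obtain ⟨p, hp⟩ := h.symm.exists_walk_length_eq_dist
    -- the first edge of a shortest walk from `y` to `x` leads one step closer to `x`
    cases p with
    | nil => simp at hn
    | @cons _ w _ hadj q =>
      have hxw : Γ.dist x w ≤ n := by
        rw [Walk.length_cons, dist_comm, hn] at hp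
        exact dist_comm (G := Γ) ▸ (dist_le q).trans (by omega)
      have hxy := hadj.symm.diff_dist_adj (u := x)
      exact (ih q.reverse.reachable (by omega)).tail ⟨hadj.symm, by omega⟩

theorem exists_ray_of_infinite_reachable (hΓ : ∀ v, (Γ.neighborSet v).Finite) {x : V}
    (hx : {y | Γ.Reachable x y}.Infinite) :
    ∃ f : ℕ → V, Injective f ∧ ∀ n, Γ.Adj (f n) (f (n + 1)) := by
  obtain ⟨f, hf0, hf⟩ := Relation.exists_seq_of_infinite_reflTransGen
    (fun v ↦ (hΓ v).subset fun w hw ↦ hw.1) (hx.mono fun y hy ↦ hy.reflTransGen_dist_succ)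
  have hdist : ∀ n, Γ.dist x (f n) = n := fun n ↦ by
    induction n with
    | zero => simp [hf0]
    | succ n ih => rw [(hf n).2, ih]
  exact ⟨f, fun m n hmn ↦ by rw [← hdist m, ← hdist n, hmn], fun n ↦ (hf n).1⟩

end SimpleGraph

section SchreierGraph

variable {G : Type*} (X : Type*) [Group G] [MulAction G X]

def schreierGraph (S : Set G) : SimpleGraph X :=
  SimpleGraph.fromRel fun y z ↦ ∃ s ∈ S, z = s • y

variable {X} {S : Set G}

theorem schreierGraph_adj_exists_smul {y z : X} (h : (schreierGraph X S).Adj y z) :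
    ∃ s ∈ S ∪ S⁻¹, z = s • y := by
  rcases ((SimpleGraph.fromRel_adj _ _ _).1 h).2 with ⟨s, hs, rfl⟩ | ⟨s, hs, rfl⟩
  · exact ⟨s, .inl hs, rfl⟩
  · exact ⟨s⁻¹, .inr (Set.inv_mem_inv.2 hs), (inv_smul_smul s z).symm⟩

theorem schreierGraph_neighborSet_finite (hS : S.Finite) (y : X) :
    ((schreierGraph X S).neighborSet y).Finite :=
  ((hS.union hS.inv).image fun g ↦ g • y).subset fun _ hz ↦
    let ⟨s, hs, hz⟩ := schreierGraph_adj_exists_smul hz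
    ⟨s, hs, hz.symm⟩

theorem schreierGraph_reachable_smul {g : G} (hg : g ∈ Subgroup.closure S) (y : X) :
    (schreierGraph X S).Reachable y (g • y) := by
  induction hg using Subgroup.closure_induction generalizing y with
  | mem s hs =>
    by_cases h : y = s • y
    · exact h ▸ SimpleGraph.Reachable.refl y
    · exact ((SimpleGraph.fromRel_adj _ _ _).2 ⟨h, .inl ⟨s, hs, rfl⟩⟩).reachable
  | one => simp
  | mul g h _ _ ihg ihh => simpa [mul_smul] using (ihh y).trans (ihg (h • y))
  | inv g _ ihg => simpa using (ihg (g⁻¹ • y)).symm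

theorem exists_ray_of_infinite_orbit (hS : S.Finite) {x : X}
    (hx : (MulAction.orbit (Subgroup.closure S) x).Infinite) :
    ∃ (v : ℕ → X) (τ : ℕ → G), Injective v ∧ (range τ).Finite ∧ ∀ n, v (n + 1) = τ n • v n := by
  obtain ⟨v, hv, hadj⟩ := SimpleGraph.exists_ray_of_infinite_reachable
    (schreierGraph_neighborSet_finite hS)
    (hx.mono <| by rintro _ ⟨g, rfl⟩; exact schreierGraph_reachable_smul g.2 x)
  choose τ hτ hstep using fun n ↦ schreierGraph_adj_exists_smul (hadj n)
  exact ⟨v, τ, hv, (hS.union hS.inv).subset (range_subset_iff.2 hτ), hstep⟩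

end SchreierGraph

section PiecewiseTranslation

variable {G X : Type*} [Group G] [MulAction G X]

theorem Equidecomp'.exists_smul_injective {B : Set X} (h : Equidecomp' G univ B) :
    ∃ σ : X → G, (range σ).Finite ∧ Injective (fun y ↦ σ y • y) ∧
      range (fun y ↦ σ y • y) = B := by
  obtain ⟨n, As, Bs, s, hAs, hBs, hdA, hdB, hsAB⟩ := h
  choose c hc using fun y ↦ mem_iUnion.1 (hAs ▸ mem_univ y)
  have hmem : ∀ y, s (c y) • y ∈ Bs (c y) := fun y ↦ hsAB (c y) ▸ smul_mem_smul_set (hc y)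
  have hc_eq : ∀ {i y}, y ∈ As i → c y = i := fun hy ↦
    hdA.eq (not_disjoint_iff.2 ⟨_, hc _, hy⟩)
  refine ⟨s ∘ c, (finite_range s).subset (range_comp_subset_range c s), fun a b hab ↦ ?_, ?_⟩
  · have hab : s (c a) • a = s (c b) • b := hab
    have hcab : c a = c b := hdB.eq (not_disjoint_iff.2 ⟨_, hmem a, hab ▸ hmem b⟩)
    exact smul_left_cancel (s (c b)) (by simpa [hcab] using hab)
  · rw [← hBs]
    ext z
    constructor
    · rintro ⟨y, rfl⟩
      exact mem_iUnion.2 ⟨c y, hmem y⟩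
    · intro hz
      obtain ⟨i, hi⟩ := mem_iUnion.1 hz
      rw [hsAB] at hi
      obtain ⟨y, hy, rfl⟩ := hi
      exact ⟨y, by simp [hc_eq hy]⟩

theorem equidecomp_univ_range_smul (σ : X → G) (hσ : (range σ).Finite)
    (hinj : Injective fun y ↦ σ y • y) : Equidecomp' G univ (range fun y ↦ σ y • y) := by
  have := hσ.to_subtype
  let e := (Finite.equivFin (range σ)).symm
  let As : Fin _ → Set X := fun i ↦ σ ⁻¹' {(e i : G)}
  have hAs : ⋃ i, As i = univ := eq_univ_of_forall fun y ↦
    mem_iUnion.2 ⟨e.symm ⟨σ y, mem_range_self y⟩, by simp only [As, Equiv.apply_symm_apply]; rfl⟩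
  have hdA : Pairwise (onFun Disjoint As) := fun i j hij ↦
    disjoint_left.2 fun y hi hj ↦ hij (e.injective (Subtype.ext (hi.symm.trans hj)))
  have hBs : ∀ i, (e i : G) • As i = (fun y ↦ σ y • y) '' As i := fun i ↦ by
    ext z
    simp only [mem_smul_set, mem_image]
    exact exists_congr fun y ↦ and_congr_right fun hy ↦ by rw [show σ y = e i from hy]
  refine ⟨_, As, fun i ↦ (e i : G) • As i, fun i ↦ e i, hAs, ?_, hdA, fun i j hij ↦ ?_,
    fun _ ↦ rfl⟩
  · simp only [hBs, ← image_iUnion, hAs, image_univ]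
  · simpa only [onFun, hBs, disjoint_image_iff hinj] using hdA hij

theorem equidecomp_univ_iff {B : Set X} :
    Equidecomp' G univ B ↔ ∃ σ : X → G, (range σ).Finite ∧ Injective (fun y ↦ σ y • y) ∧
      range (fun y ↦ σ y • y) = B :=
  ⟨Equidecomp'.exists_smul_injective, fun ⟨σ, hσ, hinj, hB⟩ ↦
    hB ▸ equidecomp_univ_range_smul σ hσ hinj⟩

theorem exists_smul_injective_range_eq_compl_of_ray {v : ℕ → X} {τ : ℕ → G}
    (hv : Injective v) (hτ : (range τ).Finite) (hstep : ∀ n, v (n + 1) = τ n • v n) :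
    ∃ σ : X → G, (range σ).Finite ∧ Injective (fun y ↦ σ y • y) ∧
      range (fun y ↦ σ y • y) = {v 0}ᶜ := by
  classical
  let σ : X → G := fun y ↦ if h : ∃ n, v n = y then τ h.choose else 1
  have hσv : ∀ n, σ (v n) = τ n := fun n ↦ by
    have h : ∃ m, v m = v n := ⟨n, rfl⟩
    simp only [σ, dif_pos h, hv h.choose_spec]
  have hσ1 : ∀ y ∉ range v, σ y = 1 := fun y hy ↦ dif_neg hy
  have hcases : ∀ y, (∃ n, y = v n ∧ σ y • y = v (n + 1)) ∨ (y ∉ range v ∧ σ y • y = y) := by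
    intro y
    by_cases hy : y ∈ range v
    · obtain ⟨n, rfl⟩ := hy
      exact .inl ⟨n, rfl, by rw [hσv, hstep]⟩
    · exact .inr ⟨hy, by rw [hσ1 y hy, one_smul]⟩
  refine ⟨σ, (hτ.insert 1).subset ?_, fun a b hab ↦ ?_, ?_⟩
  · rintro _ ⟨y, rfl⟩
    rcases hcases y with ⟨n, rfl, -⟩ | ⟨hy, -⟩
    · exact .inr ⟨n, (hσv n).symm⟩
    · exact .inl (hσ1 y hy)
  · simp only at hab
    rcases hcases a with ⟨m, rfl, hm⟩ | ⟨ha, ha'⟩ <;>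
      rcases hcases b with ⟨n, rfl, hn⟩ | ⟨hb, hb'⟩
    · exact congrArg v (Nat.succ_injective (hv (hm.symm.trans (hab.trans hn))))
    · exact absurd ⟨m + 1, hm.symm.trans (hab.trans hb')⟩ hb
    · exact absurd ⟨n + 1, hn.symm.trans (hab.symm.trans ha')⟩ ha
    · rwa [ha', hb'] at hab
  · ext z
    constructor
    · rintro ⟨y, rfl⟩
      rcases hcases y with ⟨n, rfl, hn⟩ | ⟨hy, hy'⟩
      · simpa only [mem_compl_singleton_iff, hn] using hv.ne n.succ_ne_zero
      · simpa only [mem_compl_singleton_iff, hy'] using fun h ↦ hy ⟨0, h.symm⟩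
    · intro hz
      rcases hcases z with ⟨n, rfl, -⟩ | ⟨-, hz'⟩
      · obtain ⟨m, rfl⟩ := Nat.exists_eq_add_one_of_ne_zero fun h ↦ hz (h ▸ rfl)
        exact ⟨v m, by simp only [hσv, hstep]⟩
      · exact ⟨z, hz'⟩

end PiecewiseTranslation

theorem LocFinAction.surjective_of_injective_smul {G X : Type*} [Group G] [MulAction G X]
    (hG : LocFinAction G X) {σ : X → G} (hσ : (range σ).Finite)
    (hinj : Injective fun y ↦ σ y • y) : Surjective fun y ↦ σ y • y := by
  intro z
  let H := Subgroup.closure (range σ)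
  have hmaps : MapsTo (fun y ↦ σ y • y) (MulAction.orbit H z) (MulAction.orbit H z) :=
    fun y hy ↦ MulAction.mem_orbit_of_mem_orbit (⟨σ y, Subgroup.subset_closure ⟨y, rfl⟩⟩ : H) hy
  have horbit := hG H ((Subgroup.fg_iff H).2 ⟨_, rfl, hσ⟩) z
  obtain ⟨y, -, hy⟩ := ((horbit.injOn_iff_bijOn_of_mapsTo hmaps).1 hinj.injOn).surjOn
    (MulAction.mem_orbit_self z)
  exact ⟨y, hy⟩

theorem locFin_iff_not_equidecomp_proper {G X : Type*} [Group G] [MulAction G X] :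
    LocFinAction G X ↔ ¬ ∃ B : Set X, B ⊂ Set.univ ∧ Equidecomp' G Set.univ B := by
  constructor
  · rintro hG ⟨B, hB, hE⟩
    obtain ⟨σ, hσ, hinj, rfl⟩ := equidecomp_univ_iff.1 hE
    exact hB.ne (range_eq_univ.2 (hG.surjective_of_injective_smul hσ hinj))
  · intro hne H hH x
    by_contra hx
    obtain ⟨S, rfl, hS⟩ := (Subgroup.fg_iff H).1 hH
    obtain ⟨v, τ, hv, hτ, hstep⟩ := exists_ray_of_infinite_orbit hS hx
    obtain ⟨σ, hσ, hinj, hrange⟩ := exists_smul_injective_range_eq_compl_of_ray hv hτ hstep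
    exact hne ⟨{v 0}ᶜ, ssubset_univ_iff.2 fun h ↦ (h ▸ mem_univ (v 0)) rfl,
      equidecomp_univ_iff.2 ⟨σ, hσ, hinj, hrange⟩⟩
end

section
/- A group G is locally finite if and only if G (with the left multiplication action on itself) is not equidecomposable with a proper subset of itself. -/
open Pointwise

/-!
If every finitely generated subgroup is finite, an equidecomposition of `G` with `B` yields an
injective map `f : G → G` moving each point by one of finitely many translations `s_i`; it
preserves every (finite) orbit of `⟨s_i⟩`, hence is bijective, so `B = G`.

Conversely, if `⟨T⟩` is infinite, put `S = T ∪ {1}`. For every nonempty finite `K ⊆ G` we have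
`|S K| > |K|`: otherwise `S K = K`, so `⟨T⟩` stabilises `K`, and `⟨T⟩ k ⊆ K` would be finite.
Hall's marriage theorem then gives an injection `f` with `f x ∈ S x \ {1}`, which is an
equidecomposition of `G` with the proper subset `range f`.
-/

section

variable {G X : Type*} [Group G] [MulAction G X]

lemma Equidecomp'.exists_injective_smul_of_univ {B : Set X} (h : Equidecomp' G Set.univ B) :
    ∃ (S : Finset G) (f : X → X), Function.Injective f ∧ Set.range f ⊆ B ∧
      ∀ x, ∃ g ∈ S, f x = g • x := by
  classical
  obtain ⟨n, As, Bs, s, hA, hB, -, hdisjB, hBs⟩ := h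
  have hcover : ∀ x, ∃ i, x ∈ As i := fun x => Set.mem_iUnion.mp (hA ▸ Set.mem_univ x)
  choose c hc using hcover
  have hmemB : ∀ x, s (c x) • x ∈ Bs (c x) := fun x => hBs (c x) ▸ Set.smul_mem_smul_set (hc x)
  refine ⟨Finset.univ.image s, fun x => s (c x) • x, ?_, ?_, fun x => ⟨s (c x), by simp, rfl⟩⟩
  · intro x y (hxy : s (c x) • x = s (c y) • y)
    have hcxy : c x = c y := by
      by_contra hne
      exact Set.disjoint_left.mp (hdisjB hne) (hmemB x) (hxy ▸ hmemB y)
    simpa only [hcxy, smul_left_cancel_iff] using hxy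
  · rintro _ ⟨x, rfl⟩
    exact hB ▸ Set.mem_iUnion.mpr ⟨c x, hmemB x⟩

lemma equidecomp'_univ_range_of_injective {S : Finset G} {f : X → X}
    (hf : Function.Injective f) (hS : ∀ x, ∃ g ∈ S, f x = g • x) :
    Equidecomp' G Set.univ (Set.range f) := by
  choose g hgS hg using hS
  let c : X → Fin S.card := fun x => S.equivFin ⟨g x, hgS x⟩
  let s : Fin S.card → G := fun i => S.equivFin.symm i
  have hsc : ∀ x, f x = s (c x) • x := fun x => by simp [s, c, hg x]
  have himage : ∀ i, s i • (c ⁻¹' {i}) = f '' (c ⁻¹' {i}) := fun i => by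
    ext y
    simp only [Set.mem_smul_set, Set.mem_image, Set.mem_preimage, Set.mem_singleton_iff]
    exact exists_congr fun x => and_congr_right fun hx => by rw [hsc, hx]
  refine ⟨S.card, fun i => c ⁻¹' {i}, fun i => s i • (c ⁻¹' {i}), s, ?_, ?_, ?_, ?_, fun i => rfl⟩
  · simp only [← Set.preimage_iUnion, Set.iUnion_of_singleton, Set.preimage_univ]
  · simp only [himage, ← Set.image_iUnion, ← Set.preimage_iUnion, Set.iUnion_of_singleton,
      Set.preimage_univ, Set.image_univ]
  · exact fun i j hij => Set.disjoint_singleton.mpr hij |>.preimage c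
  · intro i j hij
    simp only [Function.onFun, himage]
    exact (Set.disjoint_singleton.mpr hij |>.preimage c).image hf.injOn (Set.subset_univ _)
      (Set.subset_univ _)

lemma LocFinAction.surjective_of_injective_smul_s8 (hX : LocFinAction G X) {S : Finset G}
    {f : X → X} (hf : Function.Injective f) (hS : ∀ x, ∃ g ∈ S, f x = g • x) :
    Function.Surjective f := by
  intro y
  set H := Subgroup.closure (S : Set G)
  have hmaps : Set.MapsTo f (MulAction.orbit H y) (MulAction.orbit H y) := by
    intro z hz
    obtain ⟨g, hgS, hfz⟩ := hS z
    exact hfz ▸ MulAction.mem_orbit_of_mem_orbit (⟨g, Subgroup.subset_closure hgS⟩ : H) hz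
  have hbij := ((hX H ⟨S, rfl⟩ y).injOn_iff_bijOn_of_mapsTo hmaps).mp hf.injOn
  obtain ⟨x, -, hx⟩ := hbij.surjOn (MulAction.mem_orbit_self y)
  exact ⟨x, hx⟩

lemma LocFinAction.eq_univ_of_equidecomp'_univ (hX : LocFinAction G X) {B : Set X}
    (h : Equidecomp' G Set.univ B) : B = Set.univ := by
  obtain ⟨S, f, hf, hfB, hS⟩ := h.exists_injective_smul_of_univ
  exact Set.eq_univ_of_univ_subset <|
    (hX.surjective_of_injective_smul_s8 hf hS).range_eq ▸ hfB

variable [DecidableEq X]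

lemma exists_injective_smul_ne_of_card_lt_card_smul {S : Finset G}
    (hS : ∀ K : Finset X, K.Nonempty → K.card < (S • K).card) (x₀ : X) :
    ∃ f : X → X, Function.Injective f ∧ x₀ ∉ Set.range f ∧ ∀ x, ∃ g ∈ S, f x = g • x := by
  let t : X → Finset X := fun x => (S • ({x} : Finset X)).erase x₀
  have hall : ∀ K : Finset X, K.card ≤ (K.biUnion t).card := by
    intro K
    rcases K.eq_empty_or_nonempty with rfl | hK
    · simp
    have hbiUnion : K.biUnion t = (S • K).erase x₀ := by
      ext y
      simp only [t, Finset.mem_biUnion, Finset.mem_erase, Finset.mem_smul, Finset.mem_singleton]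
      aesop
    rw [hbiUnion]
    exact Nat.le_sub_one_of_lt (hS K hK) |>.trans Finset.pred_card_le_card_erase
  obtain ⟨f, hf, hft⟩ := (Finset.all_card_le_biUnion_card_iff_exists_injective t).mp hall
  refine ⟨f, hf, fun ⟨x, hx⟩ => (Finset.mem_erase.mp (hft x)).1 hx, fun x => ?_⟩
  obtain ⟨g, hg, y, hy, hgy⟩ := Finset.mem_smul.mp (Finset.mem_erase.mp (hft x)).2
  exact ⟨g, hg, Finset.mem_singleton.mp hy ▸ hgy.symm⟩

lemma Finset.card_lt_card_insert_one_smul [DecidableEq G] {T : Finset G}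
    (horbit : ∀ x : X, (MulAction.orbit (Subgroup.closure (T : Set G)) x).Infinite)
    {K : Finset X} (hK : K.Nonempty) : K.card < (insert 1 T • K).card := by
  have hsub : K ⊆ insert 1 T • K := by
    simpa using Finset.smul_finset_subset_smul (t := K) (Finset.mem_insert_self 1 T)
  refine (Finset.card_le_card hsub).lt_of_ne fun hcard => ?_
  have hfix : insert 1 T • K = K := (Finset.eq_of_subset_of_card_le hsub hcard.ge).symm
  have hstab : Subgroup.closure (T : Set G) ≤ MulAction.stabilizer G K :=
    (Subgroup.closure_le _).mpr fun t ht => MulAction.mem_stabilizer_iff.mpr <|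
      Finset.eq_of_subset_of_card_le
        ((Finset.smul_finset_subset_smul (Finset.mem_insert_of_mem ht)).trans hfix.subset)
        (Finset.card_smul_finset t K).ge
  obtain ⟨k, hk⟩ := hK
  refine horbit k (K.finite_toSet.subset ?_)
  rintro _ ⟨⟨h, hh⟩, rfl⟩
  rw [← MulAction.mem_stabilizer_iff.mp (hstab hh)]
  exact Finset.smul_mem_smul_finset hk

end

lemma locFinAction_self_of_forall_finite {G : Type*} [Group G]
    (hG : ∀ H : Subgroup G, H.FG → Finite H) : LocFinAction G G :=
  fun H hH x => by
    have := hG H hH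
    exact Set.finite_range fun h : H => h • x

lemma Subgroup.infinite_orbit_self {G : Type*} [Group G] (H : Subgroup G) [Infinite H] (x : G) :
    (MulAction.orbit H x).Infinite :=
  Set.infinite_range_of_injective fun _ _ h => Subtype.ext (mul_right_cancel h)

theorem locallyFiniteGroup_iff_not_equidecomp_proper {G : Type*} [Group G] :
    (∀ H : Subgroup G, H.FG → Finite H) ↔
      ¬ ∃ B : Set G, B ⊂ Set.univ ∧ Equidecomp' G Set.univ B := by
  classical
  constructor
  · rintro hG ⟨B, hB, hequi⟩
    exact hB.ne ((locFinAction_self_of_forall_finite hG).eq_univ_of_equidecomp'_univ hequi)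
  · rintro hproper _ ⟨T, rfl⟩
    by_contra hfinite
    have : Infinite (Subgroup.closure (T : Set G)) := not_finite_iff_infinite.mp hfinite
    obtain ⟨f, hf, h1, hS⟩ := exists_injective_smul_ne_of_card_lt_card_smul
      (fun _ => Finset.card_lt_card_insert_one_smul (T := T) (Subgroup.infinite_orbit_self _)) 1
    exact hproper ⟨Set.range f, Set.ssubset_univ_iff.mpr fun h => h1 (h ▸ trivial),
      equidecomp'_univ_range_of_injective hf hS⟩
end

section
/- Let G act on X in a locally finite way. If for every x ∈ X the stabilizer subgroup G_x is locally finite, then G is locally finite. -/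
open Pointwise

/-!
Let `H ≤ G` be finitely generated and `x ∈ X`. The orbit `H • x` is finite, so `H_x` has finite
index in `H` and is therefore finitely generated by Schreier's lemma. Since `H_x ≤ G_x` and `G_x`
is locally finite, `H_x` is finite, and then so is `H`.
-/

theorem Group.finite_of_injective_of_fg {A B : Type*} [Group A] [Group B] [Group.FG A]
    (hB : ∀ K : Subgroup B, K.FG → Finite K) {f : A →* B} (hf : Function.Injective f) :
    Finite A :=
  have : Finite f.range := hB f.range ((Group.fg_iff_subgroup_fg _).mp inferInstance)
  Finite.of_injective f.rangeRestrict (f.rangeRestrict_injective_iff.mpr hf)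

namespace MulAction

variable {G X : Type*} [Group G] [MulAction G X]

theorem finiteIndex_stabilizer_of_finite_orbit {x : X} (hx : (orbit G x).Finite) :
    (stabilizer G x).FiniteIndex :=
  ⟨by rw [index_stabilizer]; exact ((Set.ncard_pos hx).mpr ⟨x, mem_orbit_self x⟩).ne'⟩

def stabilizerInclusion (H : Subgroup G) (x : X) : stabilizer H x →* stabilizer G x :=
  (H.subtype.comp (stabilizer H x).subtype).codRestrict (stabilizer G x) fun s => s.2

theorem stabilizerInclusion_injective (H : Subgroup G) (x : X) :
    Function.Injective (stabilizerInclusion H x) :=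
  fun _ _ hst => Subtype.ext (Subtype.ext (congrArg Subtype.val hst :))

end MulAction

theorem locallyFinite_of_locFinAction_of_locallyFinite_stabilizers
    {G X : Type*} [Group G] [MulAction G X] [Nonempty X]
    (h : LocFinAction G X)
    (hstab : ∀ x : X, ∀ K : Subgroup (MulAction.stabilizer G x), K.FG → Finite K) :
    ∀ H : Subgroup G, H.FG → Finite H := by
  intro H hH
  obtain ⟨x⟩ := ‹Nonempty X›
  have : Group.FG H := (Group.fg_iff_subgroup_fg H).mpr hH
  have : (MulAction.stabilizer H x).FiniteIndex :=
    MulAction.finiteIndex_stabilizer_of_finite_orbit (h H hH x)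
  have : Finite (MulAction.stabilizer H x) :=
    Group.finite_of_injective_of_fg (hstab x) (MulAction.stabilizerInclusion_injective H x)
  exact (Subgroup.finite_iff_finite_and_finiteIndex (MulAction.stabilizer H x)).mpr ⟨‹_›, ‹_›⟩
end

section
/- A finitely generated group admits a faithful locally finite action on some set if and only if it is residually finite. -/
/-!
For finitely generated `G`, local finiteness says that every `G`-orbit is finite. If `g` moves a
point `x`, the permutation action on the finite orbit of `x` is a finite quotient of `G` in which
`g` survives. Conversely, the finite quotients `ψ : G → F` with `ψ g ≠ 1` act on themselves by
left multiplication through `ψ`, and their disjoint union is a faithful action with finite orbits.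
-/

open MulAction

universe u

section

variable {G : Type*} [Group G]

theorem Group.FG.countable (hG : Group.FG G) : Countable G := by
  obtain ⟨α, _, φ, hφ⟩ := Group.fg_iff_exists_freeGroup_hom_surjective_finite.mp hG
  exact hφ.countable

section FiniteOrbits

variable {X : Type u} [MulAction G X]

theorem toPermHom_orbit_ne_one {g : G} {x : X} (hgx : g • x ≠ x) :
    toPermHom G (orbit G x) g ≠ 1 := fun h =>
  hgx (congrArg Subtype.val (Equiv.ext_iff.mp h ⟨x, mem_orbit_self x⟩))

theorem exists_finite_hom_ne_one_of_finite_orbits [FaithfulSMul G X]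
    (hX : ∀ x : X, (orbit G x).Finite) {g : G} (hg : g ≠ 1) :
    ∃ (F : Type u) (_ : Group F) (_ : Finite F) (ψ : G →* F), ψ g ≠ 1 := by
  obtain ⟨x, hgx⟩ : ∃ x : X, g • x ≠ x := by
    by_contra! h
    exact hg (faithfulSMul_iff.mp inferInstance g h)
  have := (hX x).to_subtype
  exact ⟨_, inferInstance, inferInstance, toPermHom G (orbit G x), toPermHom_orbit_ne_one hgx⟩

theorem finite_orbit_sigma {ι : Type*} {Y : ι → Type*} [∀ i, MulAction G (Y i)]
    [∀ i, Finite (Y i)] (y : Σ i, Y i) : (orbit G y).Finite := by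
  obtain ⟨i, y⟩ := y
  refine (Set.finite_range (Sigma.mk i)).subset ?_
  rintro _ ⟨g, rfl⟩
  exact ⟨g • y, rfl⟩

theorem faithfulSMul_sigma_of_forall_exists_smul_ne {ι : Type*} {Y : ι → Type*}
    [∀ i, MulAction G (Y i)] (h : ∀ g : G, g ≠ 1 → ∃ i, ∃ y : Y i, g • y ≠ y) :
    FaithfulSMul G (Σ i, Y i) := by
  refine faithfulSMul_iff.mpr fun g hg => ?_
  by_contra hne
  obtain ⟨i, y, hgy⟩ := h g hne
  exact hgy (eq_of_heq (Sigma.mk.inj_iff.mp (hg ⟨i, y⟩)).2)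

end FiniteOrbits

/-- Enumerating `G` by `ℕ` keeps the disjoint union of the finite quotients in `Type`. -/
theorem exists_faithful_finite_orbits_of_forall_exists_finite_hom [Countable G]
    (h : ∀ g : G, g ≠ 1 → ∃ (F : Type) (_ : Group F) (_ : Finite F) (ψ : G →* F), ψ g ≠ 1) :
    ∃ (X : Type) (_ : MulAction G X), FaithfulSMul G X ∧ ∀ x : X, (orbit G x).Finite := by
  choose F _ _ ψ hψ using h
  obtain ⟨e, he⟩ := exists_surjective_nat G
  let Y : {n : ℕ // e n ≠ 1} → Type := fun n => F (e n) n.2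
  let : ∀ n, MulAction G (Y n) := fun n => MulAction.compHom _ (ψ (e n) n.2)
  refine ⟨Σ n, Y n, inferInstance, faithfulSMul_sigma_of_forall_exists_smul_ne ?_,
    finite_orbit_sigma⟩
  intro g hg
  obtain ⟨n, rfl⟩ := he g
  refine ⟨⟨n, hg⟩, (1 : F (e n) hg), ?_⟩
  show ψ (e n) hg (e n) * 1 ≠ 1
  simpa using hψ (e n) hg

end

theorem fg_admits_faithful_locFin_iff_residuallyFinite
    {G : Type*} [Group G] (hfg : Group.FG G) :
    (∃ (X : Type) (phi : G →* Equiv.Perm X),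
        Function.Injective phi ∧
        ∀ H : Subgroup G, H.FG → ∀ x : X,
          Set.Finite {y : X | ∃ h ∈ H, phi h x = y}) ↔
      (∀ g : G, g ≠ 1 → ∃ (F : Type) (_ : Group F) (_ : Finite F)
        (psi : G →* F), psi g ≠ 1) := by
  constructor
  · rintro ⟨X, phi, hinj, hlf⟩ g hg
    let := MulAction.compHom X phi
    have : FaithfulSMul G X := ⟨fun h => hinj (Equiv.ext h)⟩
    refine exists_finite_hom_ne_one_of_finite_orbits (fun x => (hlf ⊤ hfg.out x).subset ?_) hg
    rintro _ ⟨h, rfl⟩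
    exact ⟨h, trivial, rfl⟩
  · intro hres
    have := hfg.countable
    obtain ⟨X, _, _, hfin⟩ := exists_faithful_finite_orbits_of_forall_exists_finite_hom hres
    refine ⟨X, toPermHom G X, toPerm_injective, fun H _ x => (hfin x).subset ?_⟩
    rintro _ ⟨h, -, rfl⟩
    exact ⟨h, rfl⟩
end

section
/- If a group G admits a faithful locally finite action on a set, then G embeds into a group which admits a faithful, locally finite, and transitive action on a set. -/
/-!
Let `φ : G →* Perm X` be faithful and locally finite, and let `K = φ(G) · FSym(X)` be the
product of its image with the normal subgroup of finitary permutations. Then `G` embeds into `K`,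
and `K` acts faithfully on `X`, transitively because it contains every transposition. The action
stays locally finite: given finitely many `φ(gᵢ) σᵢ` with `σᵢ` finitary, saturate a point together
with the supports of the `σᵢ` under `⟨g₁, …, gₙ⟩`. The result is a finite set that every
`φ(gᵢ) σᵢ` maps into itself, hence onto itself, so the subgroup they generate preserves it.
-/

open Equiv Pointwise

def finitaryPerms (X : Type*) : Subgroup (Perm X) where
  carrier := {σ | {x | σ x ≠ x}.Finite}
  one_mem' := by simp
  mul_mem' {a b} ha hb := (ha.union hb).subset fun x hx => by
    by_contra h
    simp_all
  inv_mem' {a} ha := by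
    show {x | a⁻¹ x ≠ x}.Finite
    rwa [show {x | a⁻¹ x ≠ x} = {x | a x ≠ x} from
      Set.ext fun x => not_congr (Perm.inv_eq_iff_eq.trans eq_comm)]

section Finitary

variable {X : Type*}

instance finitaryPerms_normal : (finitaryPerms X).Normal where
  conj_mem σ hσ τ := (hσ.image τ).subset fun x hx =>
    ⟨τ⁻¹ x, fun h => hx (by rw [Perm.mul_apply, Perm.mul_apply, h]; exact τ.apply_symm_apply x),
      τ.apply_symm_apply x⟩

theorem swap_mem_finitaryPerms [DecidableEq X] (a b : X) : swap a b ∈ finitaryPerms X :=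
  ((Set.finite_singleton b).insert a).subset fun x hx => by
    by_contra h
    simp only [Set.mem_insert_iff, Set.mem_singleton_iff, not_or] at h
    exact hx (swap_apply_of_ne_of_ne h.1 h.2)

end Finitary

section Stable

variable {X : Type*} {T : Set X}

theorem Equiv.Perm.mapsTo_of_setOf_apply_ne_subset {σ : Perm X} (h : {x | σ x ≠ x} ⊆ T) :
    Set.MapsTo σ T T := fun y hy => by
  by_cases hfix : σ y = y
  · rwa [hfix]
  · exact h fun hσ => hfix (σ.injective hσ)

theorem Set.Finite.smul_eq_of_mapsTo (hT : T.Finite) {σ : Perm X} (h : Set.MapsTo σ T T) :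
    σ • T = T :=
  ((hT.injOn_iff_bijOn_of_mapsTo h).mp σ.injective.injOn).image_eq

theorem Set.Finite.closure_le_stabilizer (hT : T.Finite) {S : Set (Perm X)}
    (h : ∀ σ ∈ S, Set.MapsTo σ T T) : Subgroup.closure S ≤ MulAction.stabilizer (Perm X) T :=
  (Subgroup.closure_le _).mpr fun σ hσ => hT.smul_eq_of_mapsTo (h σ hσ)

end Stable

def IsLocallyFiniteAction {G X : Type*} [Group G] (φ : G →* Perm X) : Prop :=
  ∀ H : Subgroup G, H.FG → ∀ x : X, {y | ∃ h ∈ H, φ h x = y}.Finite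

namespace IsLocallyFiniteAction

variable {G X : Type*} [Group G] {φ : G →* Perm X}

theorem exists_finite_superset_mapsTo (hφ : IsLocallyFiniteAction φ) {H : Subgroup G}
    (hH : H.FG) {B : Set X} (hB : B.Finite) :
    ∃ T : Set X, B ⊆ T ∧ T.Finite ∧ ∀ g ∈ H, Set.MapsTo (φ g) T T := by
  refine ⟨⋃ b ∈ B, {y | ∃ h ∈ H, φ h b = y},
    fun b hb => Set.mem_biUnion hb ⟨1, H.one_mem, by simp⟩,
    hB.biUnion fun b _ => hφ H hH b, fun g hg y hy => ?_⟩
  obtain ⟨b, hb, h, hh, rfl⟩ := Set.mem_iUnion₂.mp hy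
  exact Set.mem_biUnion hb ⟨g * h, H.mul_mem hg hh, by simp⟩

theorem exists_finite_stable_of_subset_sup (hφ : IsLocallyFiniteAction φ) {S : Set (Perm X)}
    (hS : S.Finite) (hSK : ∀ s ∈ S, s ∈ φ.range ⊔ finitaryPerms X) (z : X) :
    ∃ T : Set X, z ∈ T ∧ T.Finite ∧ Subgroup.closure S ≤ MulAction.stabilizer (Perm X) T := by
  have := hS.to_subtype
  have hdecomp (s : S) : ∃ g, (φ g)⁻¹ * s ∈ finitaryPerms X := by
    obtain ⟨_, ⟨g, rfl⟩, σ, hσ, hs⟩ := Subgroup.mem_sup_of_normal_right.mp (hSK s s.2)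
    exact ⟨g, by rwa [← hs, inv_mul_cancel_left]⟩
  choose g hg using hdecomp
  obtain ⟨T, hBT, hT, hφT⟩ := hφ.exists_finite_superset_mapsTo
    (H := Subgroup.closure (Set.range g)) ⟨(Set.finite_range g).toFinset, by simp⟩
    ((Set.finite_singleton z).union (Set.finite_iUnion hg))
  refine ⟨T, hBT (.inl rfl), hT, hT.closure_le_stabilizer fun s hs => ?_⟩
  have hσT : Set.MapsTo ((φ (g ⟨s, hs⟩))⁻¹ * s) T T :=
    Perm.mapsTo_of_setOf_apply_ne_subset fun x hx =>
      hBT (.inr (Set.mem_iUnion.mpr ⟨⟨s, hs⟩, hx⟩))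
  have hgT := hφT _ (Subgroup.subset_closure (Set.mem_range_self ⟨s, hs⟩))
  have hsT := hgT.comp hσT
  rwa [← Perm.coe_mul, mul_inv_cancel_left] at hsT

theorem sup_finitaryPerms (hφ : IsLocallyFiniteAction φ) :
    IsLocallyFiniteAction (φ.range ⊔ finitaryPerms X).subtype := by
  rintro H ⟨S, rfl⟩ z
  obtain ⟨T, hzT, hT, hST⟩ := hφ.exists_finite_stable_of_subset_sup (S.finite_toSet.image _)
    (by rintro _ ⟨k, -, rfl⟩; exact k.2) z
  refine hT.subset ?_
  rintro _ ⟨k, hk, rfl⟩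
  have hkS := Subgroup.mem_map_of_mem (φ.range ⊔ finitaryPerms X).subtype hk
  rw [MonoidHom.map_closure, Subgroup.coe_subtype] at hkS
  rw [← MulAction.mem_stabilizer_iff.mp (hST hkS)]
  exact Set.smul_mem_smul_set hzT

end IsLocallyFiniteAction

theorem embeds_into_group_with_faithful_transitive_locFin_action
    {G : Type*} [Group G]
    (h : ∃ (X : Type) (phi : G →* Equiv.Perm X),
        Function.Injective phi ∧
        ∀ H : Subgroup G, H.FG → ∀ x : X,
          Set.Finite {y : X | ∃ h ∈ H, phi h x = y}) :
    ∃ (K : Type) (instK : Group K) (iota : G →* K),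
      Function.Injective iota ∧
      ∃ (Z : Type) (psi : K →* Equiv.Perm Z),
        Function.Injective psi ∧
        (∀ H : Subgroup K, H.FG → ∀ z : Z,
          Set.Finite {w : Z | ∃ k ∈ H, psi k z = w}) ∧
        (∀ z w : Z, ∃ k : K, psi k z = w) := by
  classical
  obtain ⟨X, phi, hinj, hlf⟩ := h
  let K := phi.range ⊔ finitaryPerms X
  have hphiK (g : G) : phi g ∈ K := Subgroup.mem_sup_left ⟨g, rfl⟩
  have hswapK (z w : X) : swap z w ∈ K := Subgroup.mem_sup_right (swap_mem_finitaryPerms z w)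
  exact ⟨K, inferInstance, phi.codRestrict K hphiK, fun a b hab => hinj (congrArg Subtype.val hab),
    X, K.subtype, Subtype.coe_injective, IsLocallyFiniteAction.sup_finitaryPerms hlf,
    fun z w => ⟨⟨swap z w, hswapK z w⟩, swap_apply_left z w⟩⟩
end
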